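/- For first-order terms over a signature where each constant carries a base type, if the typed unification algorithm returns a solved set of equations (i.e., succeeds), then the standard Martelli–Montanari unification algorithm also succeeds on the same input and returns the same solved set; conversely, if Martelli–Montanari succeeds, typed unification succeeds with the same output. -/
import Mathlib


/-- Base types for constants. -/
inductive Ty : Type
  | int | float | atom | str
  deriving DecidableEq

/-- First-order terms: variables, typed constants, and compound terms. -/
inductive Term : Type
  | var : ℕ → Term
  | const : ℕ → Ty → Term
  | app : ℕ → List Term → Term

mutual
  /-- Application of a substitution to a term. -/
  def subst (θ : ℕ → Term) : Term → Term
    | .var x => θ x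
    | .const c τ => .const c τ
    | .app f ts => .app f (substList θ ts)
  /-- Application of a substitution to a list of terms. -/
  def substList (θ : ℕ → Term) : List Term → List Term
    | [] => []
    | t :: ts => subst θ t :: substList θ ts
end

mutual
  /-- Occurrence of a variable in a term. -/
  def occurs (x : ℕ) : Term → Bool
    | .var y => x == y
    | .const _ _ => false
    | .app _ ts => occursList x ts
  /-- Occurrence of a variable in a list of terms. -/
  def occursList (x : ℕ) : List Term → Bool
    | [] => false
    | t :: ts => occurs x t || occursList x ts
end

/-- Composition of substitutions: (θ ∘ η)(X) = θ(η(X)). -/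
def comp (θ η : ℕ → Term) : ℕ → Term := fun x => subst θ (η x)

/-- The substitution binding the single variable x to t. -/
def single (x : ℕ) (t : Term) : ℕ → Term := fun y => if y = x then t else .var y

/-- θ is a unifier of t₁ and t₂. -/
def IsUnifier (θ : ℕ → Term) (t₁ t₂ : Term) : Prop := subst θ t₁ = subst θ t₂

/-- θ is a most general unifier of t₁ and t₂. -/
def IsMGU (θ : ℕ → Term) (t₁ t₂ : Term) : Prop :=
  IsUnifier θ t₁ t₂ ∧ ∀ η, IsUnifier η t₁ t₂ → ∃ δ, ∀ x, η x = subst δ (θ x)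

/-- θ is idempotent. -/
def Idempotent (θ : ℕ → Term) : Prop := ∀ t, subst θ (subst θ t) = subst θ t

/-- Configurations of the typed unification algorithm: a multiset of equations
together with the Boolean flag, or the halting value wrong. -/
inductive Config : Type
  | state : Multiset (Term × Term) → Bool → Config
  | wrong : Config

/-- Application of a single binding to an equation. -/
def substEq (x : ℕ) (t : Term) (e : Term × Term) : Term × Term :=
  (subst (single x t) e.1, subst (single x t) e.2)

/-- The rewrite rules of the typed unification algorithm. -/
inductive Step : Config → Config → Prop
  | decompose (f : ℕ) (ts ss : List Term) (R : Multiset (Term × Term)) (F : Bool)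
      (h : ts.length = ss.length) :
      Step (.state ((Term.app f ts, Term.app f ss) ::ₘ R) F)
           (.state (↑(ts.zip ss) + R) F)
  | clash (f g : ℕ) (ts ss : List Term) (R : Multiset (Term × Term)) (F : Bool)
      (h : f ≠ g ∨ ts.length ≠ ss.length) :
      Step (.state ((Term.app f ts, Term.app g ss) ::ₘ R) F) .wrong
  | constDel (c : ℕ) (τ : Ty) (R : Multiset (Term × Term)) (F : Bool) :
      Step (.state ((Term.const c τ, Term.const c τ) ::ₘ R) F) (.state R F)
  | constFalse (c d : ℕ) (τ : Ty) (R : Multiset (Term × Term)) (F : Bool) (h : c ≠ d) :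
      Step (.state ((Term.const c τ, Term.const d τ) ::ₘ R) F) (.state R false)
  | constWrong (c d : ℕ) (τ σ : Ty) (R : Multiset (Term × Term)) (F : Bool) (h : τ ≠ σ) :
      Step (.state ((Term.const c τ, Term.const d σ) ::ₘ R) F) .wrong
  | constApp (c : ℕ) (τ : Ty) (f : ℕ) (ts : List Term) (R : Multiset (Term × Term)) (F : Bool) :
      Step (.state ((Term.const c τ, Term.app f ts) ::ₘ R) F) .wrong
  | appConst (c : ℕ) (τ : Ty) (f : ℕ) (ts : List Term) (R : Multiset (Term × Term)) (F : Bool) :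
      Step (.state ((Term.app f ts, Term.const c τ) ::ₘ R) F) .wrong
  | varDel (x : ℕ) (R : Multiset (Term × Term)) (F : Bool) :
      Step (.state ((Term.var x, Term.var x) ::ₘ R) F) (.state R F)
  | orient (x : ℕ) (t : Term) (R : Multiset (Term × Term)) (F : Bool)
      (h : ∀ y, t ≠ Term.var y) :
      Step (.state ((t, Term.var x) ::ₘ R) F) (.state ((Term.var x, t) ::ₘ R) F)
  | eliminate (x : ℕ) (t : Term) (R : Multiset (Term × Term)) (F : Bool)
      (h₁ : occurs x t = false)
      (h₂ : ∃ e ∈ R, occurs x e.1 = true ∨ occurs x e.2 = true) :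
      Step (.state ((Term.var x, t) ::ₘ R) F)
           (.state ((Term.var x, t) ::ₘ R.map (substEq x t)) F)
  | occursFail (x : ℕ) (t : Term) (R : Multiset (Term × Term)) (F : Bool)
      (h₁ : occurs x t = true) (h₂ : t ≠ Term.var x) :
      Step (.state ((Term.var x, t) ::ₘ R) F) (.state R false)

/-- Reachability by rewrite steps. -/
def Reaches : Config → Config → Prop := Relation.ReflTransGen Step

/-- A configuration to which no rule applies. -/
def NormalCfg (c : Config) : Prop := ∀ c', ¬ Step c c'

/-- The typed unification algorithm on input S outputs wrong. -/
def OutputsWrong (S : Multiset (Term × Term)) : Prop :=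
  Reaches (Config.state S true) Config.wrong

/-- The typed unification algorithm on input S outputs false. -/
def OutputsFalse (S : Multiset (Term × Term)) : Prop :=
  ∃ S', Reaches (Config.state S true) (Config.state S' false) ∧ NormalCfg (Config.state S' false)

/-- The typed unification algorithm on input S₀ succeeds with solved set S. -/
def OutputsSet (S₀ S : Multiset (Term × Term)) : Prop :=
  Reaches (Config.state S₀ true) (Config.state S true) ∧ NormalCfg (Config.state S true)

/-- Configurations of the Martelli–Montanari algorithm: a multiset of
equations, or failure. -/
inductive MConfig : Type
  | state : Multiset (Term × Term) → MConfig
  | fail : MConfig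

/-- The rewrite rules of the Martelli–Montanari algorithm: the same system,
where all wrong and flag-false cases instead halt with failure. -/
inductive MStep : MConfig → MConfig → Prop
  | decompose (f : ℕ) (ts ss : List Term) (R : Multiset (Term × Term))
      (h : ts.length = ss.length) :
      MStep (.state ((Term.app f ts, Term.app f ss) ::ₘ R))
            (.state (↑(ts.zip ss) + R))
  | clash (f g : ℕ) (ts ss : List Term) (R : Multiset (Term × Term))
      (h : f ≠ g ∨ ts.length ≠ ss.length) :
      MStep (.state ((Term.app f ts, Term.app g ss) ::ₘ R)) .fail
  | constDel (c : ℕ) (τ : Ty) (R : Multiset (Term × Term)) :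
      MStep (.state ((Term.const c τ, Term.const c τ) ::ₘ R)) (.state R)
  | constClash (c d : ℕ) (τ σ : Ty) (R : Multiset (Term × Term))
      (h : (c, τ) ≠ (d, σ)) :
      MStep (.state ((Term.const c τ, Term.const d σ) ::ₘ R)) .fail
  | constApp (c : ℕ) (τ : Ty) (f : ℕ) (ts : List Term) (R : Multiset (Term × Term)) :
      MStep (.state ((Term.const c τ, Term.app f ts) ::ₘ R)) .fail
  | appConst (c : ℕ) (τ : Ty) (f : ℕ) (ts : List Term) (R : Multiset (Term × Term)) :
      MStep (.state ((Term.app f ts, Term.const c τ) ::ₘ R)) .fail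
  | varDel (x : ℕ) (R : Multiset (Term × Term)) :
      MStep (.state ((Term.var x, Term.var x) ::ₘ R)) (.state R)
  | orient (x : ℕ) (t : Term) (R : Multiset (Term × Term))
      (h : ∀ y, t ≠ Term.var y) :
      MStep (.state ((t, Term.var x) ::ₘ R)) (.state ((Term.var x, t) ::ₘ R))
  | eliminate (x : ℕ) (t : Term) (R : Multiset (Term × Term))
      (h₁ : occurs x t = false)
      (h₂ : ∃ e ∈ R, occurs x e.1 = true ∨ occurs x e.2 = true) :
      MStep (.state ((Term.var x, t) ::ₘ R))
            (.state ((Term.var x, t) ::ₘ R.map (substEq x t)))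
  | occursFail (x : ℕ) (t : Term) (R : Multiset (Term × Term))
      (h₁ : occurs x t = true) (h₂ : t ≠ Term.var x) :
      MStep (.state ((Term.var x, t) ::ₘ R)) .fail

/-- Reachability for the Martelli–Montanari system. -/
def MReaches : MConfig → MConfig → Prop := Relation.ReflTransGen MStep

/-- A Martelli–Montanari configuration to which no rule applies. -/
def MNormal (c : MConfig) : Prop := ∀ c', ¬ MStep c c'

/-- The Martelli–Montanari algorithm on input S₀ succeeds with solved set S. -/
def MOutputsSet (S₀ S : Multiset (Term × Term)) : Prop :=
  MReaches (MConfig.state S₀) (MConfig.state S) ∧ MNormal (MConfig.state S)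

/-- A typed step between flag-true states yields an M-step. -/
lemma step_true_to_mstep {S₀ S₁ : Multiset (Term × Term)}
    (h : Step (.state S₀ true) (.state S₁ true)) : MStep (.state S₀) (.state S₁) := by
  cases h with
  | decompose f ts ss R F h => exact MStep.decompose f ts ss R h
  | constDel => exact MStep.constDel _ _ _
  | varDel => exact MStep.varDel _ _
  | orient x t R F h => exact MStep.orient x t R h
  | eliminate x t R F h₁ h₂ => exact MStep.eliminate x t R h₁ h₂

/-- An M-step between states yields a typed step between flag-true states. -/
lemma mstep_to_step_true {S₀ S₁ : Multiset (Term × Term)}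
    (h : MStep (.state S₀) (.state S₁)) : Step (.state S₀ true) (.state S₁ true) := by
  cases h with
  | decompose f ts ss R h => exact Step.decompose f ts ss R true h
  | constDel => exact Step.constDel _ _ _ true
  | varDel => exact Step.varDel _ _ true
  | orient x t R h => exact Step.orient x t R true h
  | eliminate x t R h₁ h₂ => exact Step.eliminate x t R true h₁ h₂

/-- If an M-step applies to a state, then a typed step applies to it with flag true. -/
lemma mstep_applicable {S : Multiset (Term × Term)} {c : MConfig}
    (h : MStep (.state S) c) : ∃ c', Step (.state S true) c' := by
  cases h with
  | decompose f ts ss R h => exact ⟨_, Step.decompose f ts ss R true h⟩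
  | clash f g ts ss R h => exact ⟨_, Step.clash f g ts ss R true h⟩
  | constDel c τ R => exact ⟨_, Step.constDel c τ R true⟩
  | constClash c d τ σ R h =>
      by_cases hτ : τ = σ
      · subst hτ
        have hcd : c ≠ d := by
          intro hc; exact h (by rw [hc])
        exact ⟨_, Step.constFalse c d τ R true hcd⟩
      · exact ⟨_, Step.constWrong c d τ σ R true hτ⟩
  | constApp c τ f ts R => exact ⟨_, Step.constApp c τ f ts R true⟩
  | appConst c τ f ts R => exact ⟨_, Step.appConst c τ f ts R true⟩
  | varDel x R => exact ⟨_, Step.varDel x R true⟩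
  | orient x t R h => exact ⟨_, Step.orient x t R true h⟩
  | eliminate x t R h₁ h₂ => exact ⟨_, Step.eliminate x t R true h₁ h₂⟩
  | occursFail x t R h₁ h₂ => exact ⟨_, Step.occursFail x t R true h₁ h₂⟩

/-- If a typed step applies with flag true, then an M-step applies. -/
lemma step_applicable {S : Multiset (Term × Term)} {c : Config}
    (h : Step (.state S true) c) : ∃ c', MStep (.state S) c' := by
  cases h with
  | decompose f ts ss R F h => exact ⟨_, MStep.decompose f ts ss R h⟩
  | clash f g ts ss R F h => exact ⟨_, MStep.clash f g ts ss R h⟩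
  | constDel c τ R F => exact ⟨_, MStep.constDel c τ R⟩
  | constFalse c d τ R F h =>
      exact ⟨_, MStep.constClash c d τ τ R (by simp [h])⟩
  | constWrong c d τ σ R F h =>
      exact ⟨_, MStep.constClash c d τ σ R (by simp [h])⟩
  | constApp c τ f ts R F => exact ⟨_, MStep.constApp c τ f ts R⟩
  | appConst c τ f ts R F => exact ⟨_, MStep.appConst c τ f ts R⟩
  | varDel x R F => exact ⟨_, MStep.varDel x R⟩
  | orient x t R F h => exact ⟨_, MStep.orient x t R h⟩
  | eliminate x t R F h₁ h₂ => exact ⟨_, MStep.eliminate x t R h₁ h₂⟩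
  | occursFail x t R F h₁ h₂ => exact ⟨_, MStep.occursFail x t R h₁ h₂⟩

/-- A typed step from a flag-false state goes to wrong or a flag-false state. -/
lemma step_from_false {T : Multiset (Term × Term)} {c : Config}
    (h : Step (.state T false) c) : c = .wrong ∨ ∃ T', c = .state T' false := by
  cases h <;> first | exact Or.inl rfl | exact Or.inr ⟨_, rfl⟩

/-- The source of a typed step is a state. -/
lemma step_source {a c : Config} (h : Step a c) : ∃ T F, a = .state T F := by
  cases h <;> exact ⟨_, _, rfl⟩

/-- The source of an M-step is a state. -/
lemma mstep_source {a c : MConfig} (h : MStep a c) : ∃ T, a = .state T := by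
  cases h <;> exact ⟨_, rfl⟩

/-- Anything reaching a flag-true state is a flag-true state. -/
lemma reaches_true_good {S : Multiset (Term × Term)} :
    ∀ {c : Config}, Reaches c (.state S true) → ∃ T, c = .state T true := by
  intro c h
  induction h using Relation.ReflTransGen.head_induction_on with
  | refl => exact ⟨S, rfl⟩
  | head hstep _ ih =>
    obtain ⟨T, hT⟩ := ih
    subst hT
    obtain ⟨T', F, rfl⟩ := step_source hstep
    cases F with
    | false =>
        rcases step_from_false hstep with h' | ⟨T'', h'⟩ <;> simp_all
    | true => exact ⟨_, rfl⟩

theorem mreaches_of_reaches {S₀ S : Multiset (Term × Term)}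
    (h : Reaches (.state S₀ true) (.state S true)) :
    MReaches (.state S₀) (.state S) := by
  have : ∀ {c : Config}, Reaches c (.state S true) →
      ∀ T, c = .state T true → MReaches (.state T) (.state S) := by
    intro c h
    induction h using Relation.ReflTransGen.head_induction_on with
    | refl =>
        intro T hT
        cases hT
        exact Relation.ReflTransGen.refl
    | head hstep htail ih =>
        intro T hT
        subst hT
        obtain ⟨T', hT'⟩ := reaches_true_good htail
        subst hT'
        exact Relation.ReflTransGen.head (step_true_to_mstep hstep) (ih T' rfl)
  exact this h S₀ rfl

/-- Anything reaching a state is a state. -/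
lemma mreaches_good {S : Multiset (Term × Term)} :
    ∀ {c : MConfig}, MReaches c (.state S) → ∃ T, c = .state T := by
  intro c h
  induction h using Relation.ReflTransGen.head_induction_on with
  | refl => exact ⟨S, rfl⟩
  | head hstep _ _ => exact mstep_source hstep

theorem reaches_of_mreaches {S₀ S : Multiset (Term × Term)}
    (h : MReaches (.state S₀) (.state S)) :
    Reaches (.state S₀ true) (.state S true) := by
  have : ∀ {c : MConfig}, MReaches c (.state S) →
      ∀ T, c = .state T → Reaches (.state T true) (.state S true) := by
    intro c h
    induction h using Relation.ReflTransGen.head_induction_on with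
    | refl =>
        intro T hT
        cases hT
        exact Relation.ReflTransGen.refl
    | head hstep htail ih =>
        intro T hT
        subst hT
        obtain ⟨T', hT'⟩ := mreaches_good htail
        subst hT'
        exact Relation.ReflTransGen.head (mstep_to_step_true hstep) (ih T' rfl)
  exact this h S₀ rfl

/-- typed unification succeeds with solved set S iff
Martelli–Montanari succeeds with the same solved set S. -/
theorem typed_unification_conservative (t₁ t₂ : Term) (S : Multiset (Term × Term)) :
    OutputsSet {(t₁, t₂)} S ↔ MOutputsSet {(t₁, t₂)} S := by
  constructor
  · rintro ⟨hr, hn⟩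
    refine ⟨mreaches_of_reaches hr, ?_⟩
    intro c' hc'
    obtain ⟨c'', hc''⟩ := mstep_applicable hc'
    exact hn c'' hc''
  · rintro ⟨hr, hn⟩
    refine ⟨reaches_of_mreaches hr, ?_⟩
    intro c' hc'
    obtain ⟨c'', hc''⟩ := step_applicable hc'
    exact hn c'' hc''
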